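/- For every stationary process (X_i)_{i∈ℤ} over a finite alphabet 𝕏, all positive integers p and k with n = pk, and every real m ≥ 1, the expected number of distinct nonoverlapping k-blocks satisfies (k/n) E[D(k, X_1^n)] ≤ 1/m + (1 − 1/m) σ(m H(X_1^k|ℐ) − log₂(n/k)), where σ(y) = min(2^y, 1). -/

import Mathlib

open MeasureTheory Filter Real

variable {𝕏 : Type*} [Fintype 𝕏] [Nonempty 𝕏] [DecidableEq 𝕏]
  [MeasurableSpace 𝕏] [MeasurableSingletonClass 𝕏]

/-- The left shift on two-sided sequences: `(shift ω) i = ω (i + 1)`. -/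
def shift (ω : ℤ → 𝕏) : ℤ → 𝕏 := fun i => ω (i + 1)

/-- The block `X_{s+1}^{s+l}` of a sequence `ω`, as a tuple in `𝕏^l`. -/
def blk (s l : ℕ) (ω : ℤ → 𝕏) : Fin l → 𝕏 := fun i => ω ((s : ℤ) + 1 + (i : ℤ))

/-- Shannon entropy (base 2) of a distribution `p` on a finite set:
`H(p) = -∑_{w : p w > 0} p w * log₂ (p w)` (`logb 2 0 = 0`, so zero-mass
points contribute nothing). -/
noncomputable def Hent {A : Type*} [Fintype A] (p : A → ℝ) : ℝ :=
  -∑ w, p w * Real.logb 2 (p w)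

/-- Empirical nonoverlapping-block distribution
`p_k(w, x_1^n) = ⌊n/k⌋⁻¹ ∑_{i=1}^{⌊n/k⌋} 1[x_{(i-1)k+1}^{ik} = w]`. -/
noncomputable def empDist (k n : ℕ) (ω : ℤ → 𝕏) : (Fin k → 𝕏) → ℝ :=
  fun w => (∑ i ∈ Finset.range (n / k), if blk (i * k) k ω = w then (1 : ℝ) else 0) / (n / k : ℕ)

/-- Plug-in estimator `H(k, x_1^n)` of the block entropy. -/
noncomputable def plugIn (k n : ℕ) (ω : ℤ → 𝕏) : ℝ := Hent (empDist k n ω)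

/-- True block distribution `p_k(w) = P(X_1^k = w)`. -/
noncomputable def pblock (μ : Measure (ℤ → 𝕏)) (k : ℕ) : (Fin k → 𝕏) → ℝ :=
  fun w => (μ {ω | blk 0 k ω = w}).toReal

/-- Block entropy `H(k) = H(p_k)`. -/
noncomputable def Hblock (μ : Measure (ℤ → 𝕏)) (k : ℕ) : ℝ := Hent (pblock μ k)

/-- Number `D(k, x_1^n)` of distinct nonoverlapping `k`-blocks in `x_1^n`. -/
noncomputable def Dcount (k n : ℕ) (ω : ℤ → 𝕏) : ℕ :=
  Set.ncard {w : Fin k → 𝕏 | ∃ i < n / k, blk (i * k) k ω = w}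

/-- Length bound `K(k, x_1^n)` of the modified `k`-block code:
`K(k,x_1^n) = 2 log₂ k + (n/k)(H(k,x_1^n) + 2) + 3 k log₂|𝕏| (D(k,x_1^n) + 1)`. -/
noncomputable def Kcode (k n : ℕ) (ω : ℤ → 𝕏) : ℝ :=
  2 * Real.logb 2 k + ((n : ℝ) / k) * (plugIn k n ω + 2)
    + 3 * k * Real.logb 2 (Fintype.card 𝕏) * (Dcount k n ω + 1)

/-- Conditional probability `P(X_1^k = w | ℐ)` given the shift-invariant
σ-algebra `ℐ`, as a function of the sample point. -/
noncomputable def condP (μ : Measure (ℤ → 𝕏)) (k : ℕ) (w : Fin k → 𝕏) : (ℤ → 𝕏) → ℝ :=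
  μ[Set.indicator {ω | blk 0 k ω = w} (fun _ => (1 : ℝ)) | MeasurableSpace.invariants shift]

/-- Conditional block entropy `H(X_1^k | ℐ) = E[-log₂ P(X_1^k = w | ℐ)|_{w = X_1^k}]`. -/
noncomputable def condH (μ : Measure (ℤ → 𝕏)) (k : ℕ) : ℝ :=
  ∫ ω, -Real.logb 2 (condP μ k (blk 0 k ω) ω) ∂μ

/-- `σ(y) = min(2^y, 1)`. -/
noncomputable def sigmaFn (y : ℝ) : ℝ := min ((2 : ℝ) ^ y) 1

/-- Negative part `x⁻ = -x · 1[x < 0]`. -/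
noncomputable def nPart (x : ℝ) : ℝ := if x < 0 then -x else 0

/-!
Write `g_w = P(X_1^k = w | ℐ)`. By stationarity each of the `p = n/k` blocks has conditional
law `g`, so by the union bound `P(w is one of the blocks | ℐ) ≤ min(1, p g_w)` and
`E D ≤ E ∑_w min(1, p g_w)`. Split the words at the threshold `c = 2^(-m H(X_1^k|ℐ))`: those with
`g_w < c` contribute at most `p B`, where `B = ∑_{g_w < c} g_w`; each of the others has
`g_w ≥ c`, so there are at most `(1 - B)/c` of them and they contribute at most
`min(p, 1/c) (1 - B)`. Finally `E B = P(g_{X_1^k} < c) = P(-log₂ g_{X_1^k} > m H(X_1^k|ℐ)) ≤ 1/m`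
by Markov's inequality, and `min(p, 1/c) = p σ(m H(X_1^k|ℐ) - log₂ p)`.
-/

open ProbabilityTheory

lemma neg_logb_two_nonneg {x : ℝ} (hx : x ∈ Set.Icc 0 1) : 0 ≤ -logb 2 x :=
  neg_nonneg.mpr (logb_nonpos one_lt_two hx.1 hx.2)

lemma mul_neg_logb_le_inv_log_two {x : ℝ} (hx : 0 ≤ x) : x * -logb 2 x ≤ (log 2)⁻¹ := by
  calc x * -logb 2 x = negMulLog x / log 2 := by rw [logb, negMulLog]; ring
    _ ≤ 1 / log 2 := by
      gcongr
      linarith [negMulLog_le_one_sub_self hx]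
    _ = (log 2)⁻¹ := one_div _

lemma measureReal_mul_integral_lt_le {Ω : Type*} [MeasurableSpace Ω] {μ : Measure Ω}
    [IsFiniteMeasure μ] {f : Ω → ℝ} (hf₀ : 0 ≤ᵐ[μ] f) (hf : Integrable f μ) {r : ℝ}
    (hr : 0 < r) : μ.real {ω | r * ∫ ω, f ω ∂μ < f ω} ≤ r⁻¹ := by
  rcases (integral_nonneg_of_ae hf₀).eq_or_lt with hH | hH
  · have hf0 : f =ᵐ[μ] 0 := (integral_eq_zero_iff_of_nonneg_ae hf₀ hf).mp hH.symm
    have hnull : μ {ω | 0 < f ω} = 0 :=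
      measure_eq_zero_iff_ae_notMem.mpr (hf0.mono fun ω hω => by simp [hω])
    rw [← hH, mul_zero, measureReal_def, hnull, ENNReal.toReal_zero]
    exact inv_nonneg.mpr hr.le
  · have hmarkov := mul_meas_ge_le_integral_of_nonneg hf₀ hf (r * ∫ ω, f ω ∂μ)
    have hsub : μ.real {ω | r * ∫ ω, f ω ∂μ < f ω} ≤ μ.real {ω | r * ∫ ω, f ω ∂μ ≤ f ω} :=
      measureReal_mono fun _ hω => le_of_lt (α := ℝ) hω
    rw [← one_div, le_div_iff₀ hr]
    nlinarith [mul_le_mul_of_nonneg_left hsub (mul_pos hr hH).le]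

section CondProb

variable {Ω : Type*} {m m₀ : MeasurableSpace Ω} {μ : Measure Ω}

lemma measurableSet_condExp_lt (f : Ω → ℝ) (c : ℝ) : MeasurableSet[m] {ω | μ[f | m] ω < c} :=
  show MeasurableSet[m] (μ[f | m] ⁻¹' Set.Iio c) from
    stronglyMeasurable_condExp.measurable measurableSet_Iio

lemma stronglyMeasurable_min_neg_logb_condExp (f : Ω → ℝ) (N : ℝ) :
    StronglyMeasurable[m] fun ω => min (-logb 2 (μ[f | m] ω)) N :=
  ((stronglyMeasurable_condExp.measurable.log.div_const _).neg.min
    measurable_const).stronglyMeasurable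

lemma integrable_ite_condExp_lt (hm : m ≤ m₀) (f : Ω → ℝ) (c : ℝ) :
    Integrable (fun ω => if μ[f | m] ω < c then μ[f | m] ω else 0) μ := by
  refine ((integrable_condExp (m := m) (f := f)).indicator
    (hm _ (measurableSet_condExp_lt (μ := μ) f c))).congr
    (ae_of_all μ fun ω => ?_)
  simp only [Set.indicator_apply, Set.mem_ofPred_eq]

lemma integrable_of_forall_integral_min_le [IsFiniteMeasure μ] {f : Ω → ℝ}
    (hf : AEStronglyMeasurable f μ) (hf₀ : 0 ≤ᵐ[μ] f) {C : ℝ}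
    (hC : ∀ N : ℕ, ∫ ω, min (f ω) N ∂μ ≤ C) : Integrable f μ := by
  have hmin_int : ∀ N : ℕ, Integrable (fun ω => min (f ω) N) μ := fun N =>
    (integrable_const (N : ℝ)).mono' (hf.aemeasurable.min aemeasurable_const).aestronglyMeasurable
      (by filter_upwards [hf₀] with ω hω
          rw [Real.norm_of_nonneg (le_min hω N.cast_nonneg)]
          exact min_le_right _ _)
  refine ⟨hf, (hasFiniteIntegral_iff_ofReal hf₀).2 ?_⟩
  have hsup : ∀ ω, ⨆ N : ℕ, ENNReal.ofReal (min (f ω) N) = ENNReal.ofReal (f ω) := fun ω =>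
    le_antisymm (iSup_le fun N => ENNReal.ofReal_le_ofReal (min_le_left _ _))
      (le_iSup_of_le ⌈f ω⌉₊ (by rw [min_eq_left (Nat.le_ceil _)]))
  have hmono : ∀ ω, Monotone fun N : ℕ => ENNReal.ofReal (min (f ω) N) := fun ω _ _ hNM =>
    ENNReal.ofReal_le_ofReal (min_le_min_left _ (Nat.cast_le.mpr hNM))
  simp_rw [← hsup]
  rw [lintegral_iSup' (fun N => (hmin_int N).aemeasurable.ennreal_ofReal) (ae_of_all μ hmono)]
  refine lt_of_le_of_lt (iSup_le fun N => ?_) (ENNReal.ofReal_lt_top (r := C))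
  rw [← ofReal_integral_eq_lintegral_ofReal (hmin_int N)
    (by filter_upwards [hf₀] with ω hω using le_min hω N.cast_nonneg)]
  exact ENNReal.ofReal_le_ofReal (hC N)

variable [IsFiniteMeasure μ] {s : Set Ω}

lemma condExp_indicator_mem_Icc (hm : m ≤ m₀) (hs : MeasurableSet s) :
    ∀ᵐ ω ∂μ, (μ⟦s | m⟧) ω ∈ Set.Icc 0 1 := by
  have hle := condExp_mono (m := m) ((integrable_const (1 : ℝ)).indicator hs)
    (integrable_const 1) (ae_of_all μ (Set.indicator_le_self' fun _ _ => zero_le_one))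
  rw [condExp_const hm] at hle
  filter_upwards [condExp_nonneg (m := m)
      (ae_of_all μ (Set.indicator_nonneg fun _ _ => zero_le_one (α := ℝ))), hle] with ω h₀ h₁
  exact ⟨h₀, h₁⟩

lemma condExp_indicator_pos_ae (hm : m ≤ m₀) (hs : MeasurableSet s) :
    ∀ᵐ ω ∂μ, ω ∈ s → 0 < (μ⟦s | m⟧) ω := by
  set Z := μ⟦s | m⟧ ⁻¹' Set.Iic 0
  have hZ : MeasurableSet[m] Z := stronglyMeasurable_condExp.measurable measurableSet_Iic
  have hsZ : μ.real (s ∩ Z) = 0 := by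
    have h := setIntegral_condExp hm ((integrable_const (μ := μ) (1 : ℝ)).indicator hs) hZ
    rw [integral_indicator_const _ hs, measureReal_restrict_apply hs, smul_eq_mul, mul_one] at h
    exact le_antisymm (h ▸ setIntegral_nonpos (hm _ hZ) fun ω hω => hω) measureReal_nonneg
  filter_upwards [measure_eq_zero_iff_ae_notMem.mp ((measureReal_eq_zero_iff (μ := μ)).mp hsZ)]
    with ω hω hωs
  exact lt_of_not_ge fun h => hω ⟨hωs, h⟩

lemma condExp_indicator_biUnion_le {ι : Type*} (t : Finset ι) {s : ι → Set Ω}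
    (hs : ∀ i ∈ t, MeasurableSet (s i)) :
    μ⟦⋃ i ∈ t, s i | m⟧ ≤ᵐ[μ] ∑ i ∈ t, μ⟦s i | m⟧ := by
  have hint : ∀ i ∈ t, Integrable ((s i).indicator fun _ => (1 : ℝ)) μ :=
    fun i hi => (integrable_const 1).indicator (hs i hi)
  have hunion : (⋃ i ∈ t, s i).indicator (fun _ => (1 : ℝ))
      ≤ ∑ i ∈ t, (s i).indicator fun _ => 1 := by
    intro ω
    have hnonneg : ∀ j ∈ t, 0 ≤ (s j).indicator (fun _ => (1 : ℝ)) ω :=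
      fun j _ => Set.indicator_nonneg (fun _ _ => zero_le_one) ω
    rw [Finset.sum_apply]
    by_cases hω : ω ∈ ⋃ i ∈ t, s i
    · obtain ⟨i, hi, hωi⟩ := Set.mem_iUnion₂.mp hω
      rw [Set.indicator_of_mem hω]
      exact (Set.indicator_of_mem hωi (fun _ => (1 : ℝ))).ge.trans
        (Finset.single_le_sum hnonneg hi)
    · rw [Set.indicator_of_notMem hω]
      exact Finset.sum_nonneg hnonneg
  exact (condExp_mono ((integrable_const 1).indicator (t.measurableSet_biUnion hs))
    (integrable_finsetSum' t hint) (ae_of_all μ hunion)).trans_eq (condExp_finsetSum hint m)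

lemma setIntegral_eq_integral_mul_condExp_indicator (hm : m ≤ m₀) (hs : MeasurableSet s)
    {h : Ω → ℝ} (hh : StronglyMeasurable[m] h) (hint : IntegrableOn h s μ) :
    ∫ ω in s, h ω ∂μ = ∫ ω, h ω * (μ⟦s | m⟧) ω ∂μ := by
  have hprod : h * s.indicator (fun _ => 1) = s.indicator h := by
    ext ω; by_cases hω : ω ∈ s <;> simp [hω]
  rw [← integral_indicator hs, ← hprod, ← integral_condExp hm]
  exact integral_congr_ae (condExp_mul_of_stronglyMeasurable_left hh
    (hprod ▸ (integrable_indicator_iff hs).2 hint) ((integrable_const 1).indicator hs))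

lemma integrable_min_neg_logb_condExp_indicator (hm : m ≤ m₀) (hs : MeasurableSet s) (N : ℕ) :
    Integrable (fun ω => min (-logb 2 ((μ⟦s | m⟧) ω)) N) μ := by
  refine (integrable_const (N : ℝ)).mono'
    ((stronglyMeasurable_min_neg_logb_condExp _ _).mono hm).aestronglyMeasurable ?_
  filter_upwards [condExp_indicator_mem_Icc hm hs] with ω hω
  rw [Real.norm_of_nonneg (le_min (neg_logb_two_nonneg hω) N.cast_nonneg)]
  exact min_le_right _ _

/-- By the pull-out property the integrand may be weighted by `P(s | m)` instead of `1_s`,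
and `x · (-log₂ x) ≤ 1 / ln 2`. -/
lemma setIntegral_min_neg_logb_condExp_indicator_le (hm : m ≤ m₀) (hs : MeasurableSet s)
    (N : ℕ) : ∫ ω in s, min (-logb 2 ((μ⟦s | m⟧) ω)) N ∂μ ≤ μ.real Set.univ / log 2 := by
  rw [setIntegral_eq_integral_mul_condExp_indicator hm hs
    (stronglyMeasurable_min_neg_logb_condExp _ _)
    (integrable_min_neg_logb_condExp_indicator hm hs N).integrableOn]
  calc _ ≤ ∫ _ω, (log 2)⁻¹ ∂μ := by
        refine integral_mono_of_nonneg ?_ (integrable_const _) ?_ <;>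
          filter_upwards [condExp_indicator_mem_Icc hm hs] with ω hω
        · exact mul_nonneg (le_min (neg_logb_two_nonneg hω) N.cast_nonneg) hω.1
        · rw [mul_comm]
          exact (mul_le_mul_of_nonneg_left (min_le_left _ _) hω.1).trans
            (mul_neg_logb_le_inv_log_two hω.1)
    _ = _ := by rw [integral_const, smul_eq_mul, div_eq_mul_inv]

lemma integral_ite_condExp_indicator_lt (hm : m ≤ m₀) (hs : MeasurableSet s) (c : ℝ) :
    ∫ ω, (if (μ⟦s | m⟧) ω < c then (μ⟦s | m⟧) ω else 0) ∂μ
      = μ.real (s ∩ {ω | (μ⟦s | m⟧) ω < c}) := by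
  have hlow := measurableSet_condExp_lt (μ := μ) (m := m) (s.indicator fun _ => 1) c
  calc _ = ∫ ω in {ω | (μ⟦s | m⟧) ω < c}, (μ⟦s | m⟧) ω ∂μ := by
        rw [← integral_indicator (hm _ hlow)]
        simp only [Set.indicator_apply, Set.mem_ofPred_eq]
    _ = ∫ ω in {ω | (μ⟦s | m⟧) ω < c}, s.indicator (fun _ => (1 : ℝ)) ω ∂μ :=
        setIntegral_condExp hm ((integrable_const 1).indicator hs) hlow
    _ = _ := by
        rw [integral_indicator_const _ hs, measureReal_restrict_apply hs, smul_eq_mul, mul_one]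

end CondProb

lemma sum_indicator_fiber {Ω A β : Type*} [Fintype A] [AddCommMonoid β] (X : Ω → A)
    (f : A → Ω → β) (ω : Ω) : ∑ a, {ω' | X ω' = a}.indicator (f a) ω = f (X ω) ω := by
  classical
  simp [Set.indicator_apply]

section Fiber

variable {Ω A : Type*} {m m₀ : MeasurableSpace Ω} {μ : Measure Ω}
  [Fintype A] [MeasurableSpace A] [MeasurableSingletonClass A] {X : Ω → A}

lemma measurable_condExp_indicator_fiber (hm : m ≤ m₀) (hX : Measurable X) :
    Measurable fun ω => (μ⟦{ω' | X ω' = X ω} | m⟧) ω := by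
  simp_rw [← sum_indicator_fiber X fun a => μ⟦{ω' | X ω' = a} | m⟧]
  exact Finset.measurable_sum _ fun a _ =>
    (stronglyMeasurable_condExp.mono hm).measurable.indicator (hX (measurableSet_singleton a))

variable [IsFiniteMeasure μ]

lemma sum_condExp_indicator_fiber_eq_one (hm : m ≤ m₀) (hX : Measurable X) :
    ∀ᵐ ω ∂μ, ∑ a, (μ⟦{ω' | X ω' = a} | m⟧) ω = 1 := by
  have hsum := condExp_finsetSum (μ := μ) (s := Finset.univ)
    (f := fun a => {ω' | X ω' = a}.indicator fun _ => (1 : ℝ))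
    (fun a _ => (integrable_const (1 : ℝ)).indicator (hX (measurableSet_singleton a))) m
  have hone : ∑ a, {ω' | X ω' = a}.indicator (fun _ => (1 : ℝ)) = fun _ => 1 := by
    ext ω; simpa using sum_indicator_fiber X (fun _ _ => (1 : ℝ)) ω
  rw [hone, condExp_const hm] at hsum
  filter_upwards [hsum] with ω hω
  simpa using hω.symm

lemma integrable_neg_logb_condExp_indicator_fiber (hm : m ≤ m₀) (hX : Measurable X) :
    Integrable (fun ω => -logb 2 ((μ⟦{ω' | X ω' = X ω} | m⟧) ω)) μ := by
  have hfib : ∀ a, MeasurableSet {ω' | X ω' = a} := fun a => hX (measurableSet_singleton a)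
  refine integrable_of_forall_integral_min_le
    ((measurable_condExp_indicator_fiber hm hX).log.div_const _).neg.aestronglyMeasurable
    (by filter_upwards [ae_all_iff.mpr fun a => condExp_indicator_mem_Icc (μ := μ) hm (hfib a)]
          with ω hω using neg_logb_two_nonneg (hω _))
    (C := Fintype.card A * (μ.real Set.univ / log 2)) fun N => ?_
  calc ∫ ω, min (-logb 2 ((μ⟦{ω' | X ω' = X ω} | m⟧) ω)) N ∂μ
      = ∑ a, ∫ ω in {ω' | X ω' = a}, min (-logb 2 ((μ⟦{ω' | X ω' = a} | m⟧) ω)) N ∂μ := by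
        simp_rw [← integral_indicator (hfib _)]
        rw [← integral_finsetSum _ fun a _ =>
          (integrable_min_neg_logb_condExp_indicator hm (hfib a) N).indicator (hfib a)]
        simp_rw [sum_indicator_fiber X
          fun a ω => min (-logb 2 ((μ⟦{ω' | X ω' = a} | m⟧) ω)) (N : ℝ)]
    _ ≤ ∑ _a : A, μ.real Set.univ / log 2 :=
        Finset.sum_le_sum fun a _ => setIntegral_min_neg_logb_condExp_indicator_le hm (hfib a) N
    _ = _ := by simp

lemma integral_sum_condExp_indicator_fiber_lt (hm : m ≤ m₀) (hX : Measurable X) (c : ℝ) :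
    ∫ ω, ∑ a, (if (μ⟦{ω' | X ω' = a} | m⟧) ω < c then (μ⟦{ω' | X ω' = a} | m⟧) ω else 0) ∂μ
      = μ.real {ω | (μ⟦{ω' | X ω' = X ω} | m⟧) ω < c} := by
  have hfib : ∀ a, MeasurableSet {ω' | X ω' = a} := fun a => hX (measurableSet_singleton a)
  have hdisj : Set.PairwiseDisjoint ↑(Finset.univ : Finset A)
      fun a => {ω' | X ω' = a} ∩ {ω | (μ⟦{ω' | X ω' = a} | m⟧) ω < c} :=
    fun a _ b _ hab => Set.disjoint_left.mpr fun ω ha hb => hab (ha.1.symm.trans hb.1)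
  rw [integral_finsetSum _ fun a _ => integrable_ite_condExp_lt hm _ c]
  simp_rw [integral_ite_condExp_indicator_lt hm (hfib _)]
  rw [← measureReal_biUnion_finset hdisj
    fun a _ => (hfib a).inter (hm _ (measurableSet_condExp_lt (μ := μ) _ c))]
  congr 1
  ext ω
  simp

lemma measureReal_condExp_indicator_fiber_lt_le (hm : m ≤ m₀) (hX : Measurable X) {r : ℝ}
    (hr : 0 < r) :
    μ.real {ω | (μ⟦{ω' | X ω' = X ω} | m⟧) ω
      < 2 ^ (-(r * ∫ ω, -logb 2 ((μ⟦{ω' | X ω' = X ω} | m⟧) ω) ∂μ))} ≤ r⁻¹ := by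
  have hfib : ∀ a, MeasurableSet {ω' | X ω' = a} := fun a => hX (measurableSet_singleton a)
  refine le_of_eq_of_le (measureReal_congr (eventuallyEq_set.mpr ?_))
    (measureReal_mul_integral_lt_le ?_ (integrable_neg_logb_condExp_indicator_fiber hm hX) hr)
  · filter_upwards [ae_all_iff.mpr fun a => condExp_indicator_pos_ae (μ := μ) hm (hfib a)]
      with ω hω
    rw [lt_neg, logb_lt_iff_lt_rpow one_lt_two (hω (X ω) rfl)]
  · filter_upwards [ae_all_iff.mpr fun a => condExp_indicator_mem_Icc (μ := μ) hm (hfib a)]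
      with ω hω
    exact neg_logb_two_nonneg (hω _)

end Fiber

lemma sum_min_one_mul_le {A : Type*} [Fintype A] {q : A → ℝ} (hq₀ : ∀ a, 0 ≤ q a)
    (hq₁ : ∑ a, q a = 1) (P : ℝ) {c : ℝ} (hc : 0 < c) :
    ∑ a, min 1 (P * q a) ≤ P * ∑ a, (if q a < c then q a else 0)
      + min P c⁻¹ * (1 - ∑ a, (if q a < c then q a else 0)) := by
  have hrest : 1 - ∑ a, (if q a < c then q a else 0) = ∑ a, (if q a < c then 0 else q a) := by
    rw [← hq₁, ← Finset.sum_sub_distrib]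
    exact Finset.sum_congr rfl fun a _ => by split_ifs <;> ring
  rw [hrest, Finset.mul_sum, Finset.mul_sum, ← Finset.sum_add_distrib]
  refine Finset.sum_le_sum fun a _ => ?_
  split_ifs with hlt
  · rw [mul_zero, add_zero]
    exact min_le_right _ _
  · have hqc : 1 ≤ c⁻¹ * q a := by
      rw [inv_mul_eq_div, one_le_div hc]
      exact not_lt.mp hlt
    rw [mul_zero, zero_add, min_mul_of_nonneg _ _ (hq₀ a)]
    exact le_min (min_le_right _ _) ((min_le_left _ _).trans hqc)

lemma mul_sigmaFn_sub_logb {P : ℝ} (hP : 0 < P) (t : ℝ) :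
    P * sigmaFn (t - logb 2 P) = min P (2 ^ t) := by
  rw [sigmaFn, rpow_sub two_pos, rpow_logb two_pos (by norm_num) hP,
    mul_min_of_nonneg _ _ hP.le, mul_div_cancel₀ _ hP.ne', mul_one, min_comm]

lemma condExp_comp_iterate_invariants {Ω E : Type*} [MeasurableSpace Ω] [NormedAddCommGroup E]
    [NormedSpace ℝ E] [CompleteSpace E] {μ : Measure Ω} [IsFiniteMeasure μ] {T : Ω → Ω}
    (hT : MeasurePreserving T μ μ) {f : Ω → E} (hf : Integrable f μ) (j : ℕ) :
    μ[f ∘ T^[j] | MeasurableSpace.invariants T] =ᵐ[μ] μ[f | MeasurableSpace.invariants T] := by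
  have hI := MeasurableSpace.invariants_le T
  have hTj := hT.iterate j
  refine (ae_eq_condExp_of_forall_setIntegral_eq hI
    ((hTj.integrable_comp hf.aestronglyMeasurable).mpr hf)
    (fun s _ _ => integrable_condExp.integrableOn) (fun s hs _ => ?_)
    stronglyMeasurable_condExp.aestronglyMeasurable).symm
  have hs_inv : T^[j] ⁻¹' s = s := (MeasurableSpace.le_invariants_iterate T j s hs).2
  have hs₀ := hI s hs
  rw [setIntegral_condExp hI hf hs, ← integral_indicator hs₀, ← integral_indicator hs₀]
  calc ∫ ω, s.indicator f ω ∂μ = ∫ ω, s.indicator f (T^[j] ω) ∂μ := by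
        rw [← integral_map hTj.measurable.aemeasurable
          (by rw [hTj.map_eq]; exact (hf.indicator hs₀).aestronglyMeasurable), hTj.map_eq]
    _ = ∫ ω, (T^[j] ⁻¹' s).indicator (f ∘ T^[j]) ω ∂μ := by
        simp only [Set.indicator_comp_right]
    _ = ∫ ω, s.indicator (f ∘ T^[j]) ω ∂μ := by rw [hs_inv]

section Blocks

variable {α : Type*}

lemma shift_iterate_apply (j : ℕ) (ω : ℤ → α) (i : ℤ) : shift^[j] ω i = ω (i + j) := by
  induction j generalizing ω with
  | zero => simp
  | succ j ih =>
    rw [Function.iterate_succ_apply, ih, shift]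
    congr 1
    push_cast
    ring

lemma blk_shift_iterate (j l : ℕ) (ω : ℤ → α) : blk 0 l (shift^[j] ω) = blk j l ω := by
  funext i
  rw [blk, blk, shift_iterate_apply]
  congr 1
  push_cast
  ring

def blockOccurs (k p : ℕ) (w : Fin k → α) : Set (ℤ → α) :=
  ⋃ i ∈ Finset.range p, {ω | blk (i * k) k ω = w}

lemma Dcount_eq_sum_indicator_blockOccurs [Fintype α] (k n : ℕ) (ω : ℤ → α) :
    (Dcount k n ω : ℝ) = ∑ w, (blockOccurs k (n / k) w).indicator (fun _ => 1) ω := by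
  classical
  have hset : {w : Fin k → α | ∃ i < n / k, blk (i * k) k ω = w}
      = ↑(Finset.univ.filter fun w => ω ∈ blockOccurs k (n / k) w) := by
    ext w
    simp [blockOccurs]
  rw [Dcount, hset, Set.ncard_coe_finset]
  simp [Set.indicator_apply]

variable [MeasurableSpace α]

lemma measurable_blk (s l : ℕ) : Measurable (blk (𝕏 := α) s l) :=
  measurable_pi_lambda _ fun _ => measurable_pi_apply _

variable [MeasurableSingletonClass α] {μ : Measure (ℤ → α)} [IsFiniteMeasure μ]

lemma measurableSet_blockOccurs (k p : ℕ) (w : Fin k → α) :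
    MeasurableSet (blockOccurs k p w) :=
  Finset.measurableSet_biUnion _ fun i _ => measurable_blk (i * k) k (measurableSet_singleton w)

lemma condExp_indicator_blk_ae_eq_condP (hstat : MeasurePreserving shift μ μ) (j k : ℕ)
    (w : Fin k → α) :
    μ⟦{ω | blk j k ω = w} | MeasurableSpace.invariants shift⟧ =ᵐ[μ] condP μ k w := by
  have hshift : {ω | blk j k ω = w}.indicator (fun _ => (1 : ℝ))
      = {ω | blk 0 k ω = w}.indicator (fun _ => 1) ∘ shift^[j] := by
    ext ω
    rw [Function.comp_apply, ← Set.indicator_comp_right]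
    congr
    ext ω'
    simp [blk_shift_iterate]
  rw [hshift]
  exact condExp_comp_iterate_invariants hstat
    ((integrable_const 1).indicator (measurable_blk 0 k (measurableSet_singleton w))) j

lemma condExp_blockOccurs_le (hstat : MeasurePreserving shift μ μ) (k p : ℕ) (w : Fin k → α) :
    ∀ᵐ ω ∂μ, (μ⟦blockOccurs k p w | MeasurableSpace.invariants shift⟧) ω
      ≤ min 1 (p * condP μ k w ω) := by
  filter_upwards [condExp_indicator_mem_Icc (MeasurableSpace.invariants_le shift)
      (measurableSet_blockOccurs k p w),
    condExp_indicator_biUnion_le (m := MeasurableSpace.invariants shift) (μ := μ)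
      (Finset.range p) (s := fun i => {ω | blk (i * k) k ω = w})
      fun i _ => measurable_blk (i * k) k (measurableSet_singleton w),
    ae_all_iff.mpr fun i => condExp_indicator_blk_ae_eq_condP hstat (i * k) k w]
    with ω hIcc hunion hstat_eq
  refine le_min hIcc.2 (hunion.trans_eq ?_)
  rw [Finset.sum_apply, Finset.sum_congr rfl fun i _ => hstat_eq i, Finset.sum_const,
    Finset.card_range, nsmul_eq_mul]

end Blocks

lemma integral_Dcount_le {α : Type*} [Fintype α] [MeasurableSpace α] [MeasurableSingletonClass α]
    {μ : Measure (ℤ → α)} [IsProbabilityMeasure μ] (hstat : MeasurePreserving shift μ μ)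
    (k n : ℕ) {c : ℝ} (hc : 0 < c) :
    ∫ ω, (Dcount k n ω : ℝ) ∂μ
      ≤ (n / k : ℕ) * ∫ ω, ∑ w, (if condP μ k w ω < c then condP μ k w ω else 0) ∂μ
        + min ((n / k : ℕ) : ℝ) c⁻¹
          * (1 - ∫ ω, ∑ w, (if condP μ k w ω < c then condP μ k w ω else 0) ∂μ) := by
  have hI := MeasurableSpace.invariants_le (shift (𝕏 := α))
  have hX := measurable_blk (α := α) 0 k
  set P : ℝ := ((n / k : ℕ) : ℝ)
  set B := fun ω => ∑ w, (if condP μ k w ω < c then condP μ k w ω else 0)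
  have hB : Integrable B μ := integrable_finsetSum _ fun w _ => integrable_ite_condExp_lt hI _ c
  have hB' : Integrable (fun ω => min P c⁻¹ * (1 - B ω)) μ :=
    ((integrable_const 1).sub hB).const_mul _
  calc ∫ ω, (Dcount k n ω : ℝ) ∂μ
      = ∫ ω, ∑ w, (μ⟦blockOccurs k (n / k) w | MeasurableSpace.invariants shift⟧) ω ∂μ := by
        simp_rw [Dcount_eq_sum_indicator_blockOccurs]
        rw [integral_finsetSum _ fun w _ =>
            (integrable_const 1).indicator (measurableSet_blockOccurs k _ w),
          integral_finsetSum _ fun w _ => integrable_condExp]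
        exact Finset.sum_congr rfl fun w _ => (integral_condExp hI).symm
    _ ≤ ∫ ω, P * B ω + min P c⁻¹ * (1 - B ω) ∂μ := by
        refine integral_mono_ae (integrable_finsetSum _ fun w _ => integrable_condExp)
          ((hB.const_mul P).add hB') ?_
        filter_upwards [sum_condExp_indicator_fiber_eq_one hI hX,
          ae_all_iff.mpr fun w => condExp_indicator_mem_Icc hI (hX (measurableSet_singleton w)),
          ae_all_iff.mpr fun w => condExp_blockOccurs_le hstat k (n / k) w] with ω hsum hIcc hocc
        exact (Finset.sum_le_sum fun w _ => hocc w).trans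
          (sum_min_one_mul_le (fun w => (hIcc w).1) hsum P hc)
    _ = P * ∫ ω, B ω ∂μ + min P c⁻¹ * (1 - ∫ ω, B ω ∂μ) := by
        rw [integral_add (hB.const_mul P) hB',
          integral_const_mul, integral_const_mul, integral_sub (integrable_const 1) hB]
        simp

/-- For a stationary process over a finite alphabet, positive integers `p`, `k`
with `n = pk`, and real `m ≥ 1`, the expected number of distinct nonoverlapping
`k`-blocks satisfies
`(k/n) E[D(k,X_1^n)] ≤ 1/m + (1 − 1/m) σ(m H(X_1^k|ℐ) − log₂(n/k))`
where `σ(y) = min(2^y, 1)`. -/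
theorem expected_Dcount_le_sigma_condH
    {μ : Measure (ℤ → 𝕏)} [IsProbabilityMeasure μ]
    (hstat : MeasurePreserving shift μ μ)
    (p k n : ℕ) (hp : 0 < p) (hk : 0 < k) (hn : n = p * k)
    (m : ℝ) (hm : 1 ≤ m) :
    ((k : ℝ) / n) * ∫ ω, (Dcount k n ω : ℝ) ∂μ ≤
      1 / m + (1 - 1 / m) * sigmaFn (m * condH μ k - Real.logb 2 ((n : ℝ) / k)) := by
  have hI := MeasurableSpace.invariants_le (shift (𝕏 := 𝕏))
  have hX := measurable_blk (α := 𝕏) 0 k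
  have hP : (0 : ℝ) < p := by exact_mod_cast hp
  have hkn : (k : ℝ) / n = (p : ℝ)⁻¹ := by rw [hn]; push_cast; field_simp
  set c : ℝ := 2 ^ (-(m * condH μ k)) with hc
  have hσ : p * sigmaFn (m * condH μ k - logb 2 ((n : ℝ) / k)) = min (p : ℝ) c⁻¹ := by
    rw [← inv_div, hkn, inv_inv, mul_sigmaFn_sub_logb hP, hc, rpow_neg zero_le_two, inv_inv]
  set σ := sigmaFn (m * condH μ k - logb 2 ((n : ℝ) / k))
  have hB : ∫ ω, ∑ w, (if condP μ k w ω < c then condP μ k w ω else 0) ∂μ ≤ m⁻¹ :=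
    (integral_sum_condExp_indicator_fiber_lt hI hX c).trans_le
      (measureReal_condExp_indicator_fiber_lt_le hI hX (by linarith))
  have hD := integral_Dcount_le hstat k n (c := c) (by positivity)
  rw [hn, Nat.mul_div_cancel _ hk, ← hσ, ← hn] at hD
  rw [hkn, inv_mul_le_iff₀ hP, one_div]
  have hσ₁ : σ ≤ 1 := min_le_right _ _
  nlinarith [mul_nonneg (mul_nonneg hP.le (sub_nonneg.2 hσ₁)) (sub_nonneg.2 hB)]
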